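/- arXiv:2304.05739 — 3 statements merged into one kernel-verified Lean document; each statement's English description precedes it below -/
import Mathlib

section
/- With the planar-radial vector fields P¹_{i,j} = (z₁w₁)^i (z₂w₂)^j (z₁ ∂/∂z₁ + w₁ ∂/∂w₁) and P²_{m,n} = (z₁w₁)^m (z₂w₂)^n (z₂ ∂/∂z₂ + w₂ ∂/∂w₂) on ℂ⁴, the Lie bracket satisfies [P¹_{i,j}, P²_{m,n}] = 2m P²_{m+i, n+j} − 2j P¹_{m+i, n+j}. -/
/-!
Write `E₁ = z₁ ∂/∂z₁ + w₁ ∂/∂w₁` and `E₂ = z₂ ∂/∂z₂ + w₂ ∂/∂w₂`, so that `P¹_{i,j} = (z₁w₁)^i (z₂w₂)^j E₁`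
and `P²_{m,n} = (z₁w₁)^m (z₂w₂)^n E₂`. For any fields `[f v, g w] = f v(g) w - g w(f) v + f g [v, w]`,
and `[E₁, E₂] = 0`. Eigenvalues of a derivation add under products, and each coordinate is an
eigenvector of `E₁` and `E₂`, so `(z₁w₁)^a (z₂w₂)^b` has eigenvalue `2a` under `E₁` and `2b` under `E₂`.
-/

open MvPolynomial

/-- Polynomials on ℂ⁴ with coordinates (z₁, w₁, z₂, w₂). -/
abbrev Poly4 : Type := MvPolynomial (Fin 4) ℂ

/-- Polynomial vector fields on ℂ⁴, identified with their component polynomials. -/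
abbrev VF : Type := Fin 4 → Poly4

/-- Action of a vector field on a polynomial (as a derivation). -/
noncomputable def vAct (v : VF) (p : Poly4) : Poly4 := ∑ i, v i * pderiv i p

/-- Lie bracket of vector fields, [v,w] = vw − wv as differential operators. -/
noncomputable def vBr (v w : VF) : VF := fun k => vAct v (w k) - vAct w (v k)

/-- The monomial (z₁w₁)^m (z₂w₂)^n, i.e. |z₁|^{2m}|z₂|^{2n}. -/
noncomputable def mon (m n : ℕ) : Poly4 := (X 0 * X 1) ^ m * (X 2 * X 3) ^ n

/-- Planar-radial vector field P¹_{m,n} = (z₁w₁)^m (z₂w₂)^n (z₁ ∂/∂z₁ + w₁ ∂/∂w₁). -/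
noncomputable def P1 (m n : ℕ) : VF := fun k => mon m n * ![X 0, X 1, 0, 0] k

/-- Planar-radial vector field P²_{m,n} = (z₁w₁)^m (z₂w₂)^n (z₂ ∂/∂z₂ + w₂ ∂/∂w₂). -/
noncomputable def P2 (m n : ℕ) : VF := fun k => mon m n * ![0, 0, X 2, X 3] k

/-- Planar-rotating vector field R¹_{m,n} = (z₁w₁)^m (z₂w₂)^n (I z₁ ∂/∂z₁ − I w₁ ∂/∂w₁). -/
noncomputable def R1 (m n : ℕ) : VF :=
  fun k => mon m n * ![C Complex.I * X 0, -(C Complex.I) * X 1, 0, 0] k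

/-- Planar-rotating vector field R²_{m,n} = (z₁w₁)^m (z₂w₂)^n (I z₂ ∂/∂z₂ − I w₂ ∂/∂w₂). -/
noncomputable def R2 (m n : ℕ) : VF :=
  fun k => mon m n * ![0, 0, C Complex.I * X 2, -(C Complex.I) * X 3] k

section Eigenvector

variable {R A : Type*} [CommSemiring R] [CommSemiring A] [Algebra R A] (D : Derivation R A A)
  {p q : A} {a b : R}

theorem Derivation.apply_mul_of_apply_eq_smul (hp : D p = a • p) (hq : D q = b • q) :
    D (p * q) = (a + b) • (p * q) := by
  rw [D.leibniz, hp, hq, add_smul, smul_eq_mul, smul_eq_mul, mul_smul_comm, mul_smul_comm,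
    mul_comm q p, add_comm]

theorem Derivation.apply_pow_of_apply_eq_smul (hp : D p = a • p) (n : ℕ) :
    D (p ^ n) = (n * a) • p ^ n := by
  induction n with
  | zero => simp
  | succ n ih =>
    rw [pow_succ, D.apply_mul_of_apply_eq_smul ih hp]
    push_cast
    ring_nf

end Eigenvector

noncomputable def vDer (v : VF) : Derivation ℂ Poly4 Poly4 := ∑ i, v i • pderiv i

theorem vDer_apply (v : VF) (p : Poly4) : vDer v p = vAct v p := by
  have h := congrFun (map_sum Derivation.coeFnAddMonoidHom (fun i ↦ v i • pderiv i) .univ) p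
  simpa only [vDer, vAct, Derivation.coeFnAddMonoidHom_apply, Finset.sum_apply,
    Derivation.smul_apply, smul_eq_mul] using h

theorem vAct_zero (v : VF) : vAct v 0 = 0 := by
  rw [← vDer_apply, map_zero]

theorem vAct_mul (v : VF) (p q : Poly4) : vAct v (p * q) = p * vAct v q + q * vAct v p := by
  simp only [← vDer_apply, Derivation.leibniz, smul_eq_mul]

theorem vAct_X (v : VF) (i : Fin 4) : vAct v (X i) = v i := by
  simp [vAct, pderiv_X, Pi.single_apply]

theorem vAct_smul_left (f : Poly4) (v : VF) (p : Poly4) : vAct (f • v) p = f * vAct v p := by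
  simp only [vAct, Finset.mul_sum, Pi.smul_apply, smul_eq_mul, mul_assoc]

theorem vBr_smul_smul (f g : Poly4) (v w : VF) :
    vBr (f • v) (g • w) = (f * vAct v g) • w - (g * vAct w f) • v + (f * g) • vBr v w := by
  funext k
  simp only [vBr, vAct_smul_left, vAct_mul, Pi.smul_apply, smul_eq_mul, Pi.add_apply,
    Pi.sub_apply]
  ring

theorem vAct_mon_of_eq_smul_X (v : VF) (c : Fin 4 → ℂ) (hv : ∀ i, v i = c i • X i) (a b : ℕ) :
    vAct v (mon a b) = (a * (c 0 + c 1) + b * (c 2 + c 3)) • mon a b := by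
  have hX (i : Fin 4) : vDer v (X i) = c i • X i := by rw [vDer_apply, vAct_X, hv]
  have h01 := (vDer v).apply_mul_of_apply_eq_smul (hX 0) (hX 1)
  have h23 := (vDer v).apply_mul_of_apply_eq_smul (hX 2) (hX 3)
  rw [← vDer_apply, mon]
  exact (vDer v).apply_mul_of_apply_eq_smul
    ((vDer v).apply_pow_of_apply_eq_smul h01 a) ((vDer v).apply_pow_of_apply_eq_smul h23 b)

noncomputable def euler₁ : VF := ![X 0, X 1, 0, 0]

noncomputable def euler₂ : VF := ![0, 0, X 2, X 3]

theorem P1_eq_smul_euler₁ (m n : ℕ) : P1 m n = mon m n • euler₁ := rfl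

theorem P2_eq_smul_euler₂ (m n : ℕ) : P2 m n = mon m n • euler₂ := rfl

theorem vBr_euler₁_euler₂ : vBr euler₁ euler₂ = 0 := by
  funext k
  fin_cases k <;> simp [vBr, euler₁, euler₂, vAct_X, vAct_zero]

theorem vAct_euler₁_mon (a b : ℕ) : vAct euler₁ (mon a b) = (2 * a : ℂ) • mon a b := by
  rw [vAct_mon_of_eq_smul_X euler₁ ![1, 1, 0, 0] (by intro i; fin_cases i <;> simp [euler₁])]
  norm_num [Matrix.cons_val_two, Matrix.cons_val_three, mul_comm]

theorem vAct_euler₂_mon (a b : ℕ) : vAct euler₂ (mon a b) = (2 * b : ℂ) • mon a b := by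
  rw [vAct_mon_of_eq_smul_X euler₂ ![0, 0, 1, 1] (by intro i; fin_cases i <;> simp [euler₂])]
  norm_num [Matrix.cons_val_two, Matrix.cons_val_three, mul_comm]

theorem mon_mul_mon (a b c d : ℕ) : mon a b * mon c d = mon (a + c) (b + d) := by
  simp only [mon, pow_add]
  ring

/-- [P¹_{i,j}, P²_{m,n}] = 2m P²_{m+i, n+j} − 2j P¹_{m+i, n+j}. -/
theorem bracket_P1_P2 (i j m n : ℕ) :
    vBr (P1 i j) (P2 m n)
      = ((2:ℂ) * (m:ℂ)) • P2 (m+i) (n+j) - ((2:ℂ) * (j:ℂ)) • P1 (m+i) (n+j) := by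
  rw [P1_eq_smul_euler₁, P2_eq_smul_euler₂, vBr_smul_smul, vBr_euler₁_euler₂,
    vAct_euler₁_mon, vAct_euler₂_mon, P1_eq_smul_euler₁, P2_eq_smul_euler₂]
  simp only [smul_zero, add_zero, mul_smul_comm, smul_assoc, mon_mul_mon, add_comm m i,
    add_comm n j]
end

section
/- The real span G of the vector fields {P^k_{m,n}, R^k_{m,n} : k ∈ {1,2}, m,n ∈ ℤ≥0} on ℂ⁴ is closed under the Lie bracket, i.e., G is a real Lie subalgebra of the Lie algebra of polynomial vector fields on ℂ⁴. -/
open MvPolynomial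

/-- The generating set of the Lie algebra 𝒢: all P^k_{m,n} and R^k_{m,n}. -/
def genSet : Set VF :=
  {v | ∃ m n : ℕ, v = P1 m n ∨ v = P2 m n ∨ v = R1 m n ∨ v = R2 m n}


/-! Every generator is `mon m n · D_a` with `D_a = ∑ aᵢ xᵢ ∂ᵢ` a diagonal linear field, and
`D_a` acts on `mon m n` as multiplication by the weight `m (a₀ + a₁) + n (a₂ + a₃)`. Diagonal
fields commute, so `[f D_a, g D_b] = f D_a(g) D_b - g D_b(f) D_a`, and the bracket of two
generators is a combination of generators of the summed degree. The coefficients are real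
because the weights of `P¹, P², R¹, R²` are `2m, 2n, 0, 0`: the rotating fields annihilate
every `zᵢwᵢ`. Bilinearity of the bracket extends the closure from generators to the span. -/

namespace Derivation

variable {R A : Type*} [CommSemiring R] [CommSemiring A] [Algebra R A]
  (D : Derivation R A A) {p q : A} {c d : R}

theorem apply_mul_of_eq_smul (hp : D p = c • p) (hq : D q = d • q) :
    D (p * q) = (c + d) • (p * q) := by
  rw [D.leibniz, hp, hq, add_smul, smul_eq_mul, smul_eq_mul, mul_smul_comm, mul_smul_comm,
    mul_comm q, add_comm]

theorem apply_pow_of_eq_smul (hp : D p = c • p) (n : ℕ) : D (p ^ n) = (n * c) • p ^ n := by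
  induction n with
  | zero => simp
  | succ n ih => rw [pow_succ, D.apply_mul_of_eq_smul ih hp, Nat.cast_succ, add_one_mul]

end Derivation

namespace MvPolynomial

variable {σ R : Type*} [Fintype σ] [CommSemiring R]

noncomputable def diagEuler (a : σ → R) : Derivation R (MvPolynomial σ R) (MvPolynomial σ R) :=
  ∑ i, (C (a i) * X i) • pderiv i

theorem diagEuler_apply (a : σ → R) (p : MvPolynomial σ R) :
    diagEuler a p = ∑ i, C (a i) * X i * pderiv i p := by
  rw [diagEuler, ← Derivation.coeFnAddMonoidHom_apply, map_sum, Finset.sum_apply]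
  simp [Derivation.coeFnAddMonoidHom_apply, Derivation.smul_apply]

theorem diagEuler_X (a : σ → R) (k : σ) : diagEuler a (X k) = a k • X k := by
  classical
  simp [diagEuler_apply, pderiv_X, Pi.single_apply, smul_eq_C_mul]

end MvPolynomial

noncomputable def diagField (f : Poly4) (a : Fin 4 → ℂ) : VF := fun k => f * (C (a k) * X k)

theorem vAct_diagField (f : Poly4) (a : Fin 4 → ℂ) (p : Poly4) :
    vAct (diagField f a) p = f * diagEuler a p := by
  simp only [vAct, diagField, diagEuler_apply, Finset.mul_sum, mul_assoc]

theorem vBr_diagField (f g : Poly4) (a b : Fin 4 → ℂ) :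
    vBr (diagField f a) (diagField g b) =
      diagField (f * diagEuler a g) b - diagField (g * diagEuler b f) a := by
  ext1 k
  simp only [vBr, vAct_diagField, diagField, Pi.sub_apply, Derivation.leibniz, ← smul_eq_C_mul,
    Derivation.map_smul, diagEuler_X, smul_eq_mul, smul_comm (b k) (a k)]
  ring

noncomputable def vBrₗ : VF →ₗ[ℂ] VF →ₗ[ℂ] VF :=
  LinearMap.mk₂ ℂ vBr
    (fun u v w => by
      ext1 k
      simp only [vBr, vAct, Pi.add_apply, map_add, add_mul, mul_add, Finset.sum_add_distrib]
      ring)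
    (fun c v w => by
      ext1 k
      simp only [vBr, vAct, Pi.smul_apply, Derivation.map_smul, smul_mul_assoc, mul_smul_comm,
        Finset.smul_sum, smul_sub])
    (fun u v w => by
      ext1 k
      simp only [vBr, vAct, Pi.add_apply, map_add, add_mul, mul_add, Finset.sum_add_distrib]
      ring)
    (fun c v w => by
      ext1 k
      simp only [vBr, vAct, Pi.smul_apply, Derivation.map_smul, smul_mul_assoc, mul_smul_comm,
        Finset.smul_sum, smul_sub])

theorem diagField_smul (c : ℂ) (f : Poly4) (a : Fin 4 → ℂ) :
    diagField (c • f) a = c • diagField f a := by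
  ext1 k
  simp only [diagField, Pi.smul_apply, smul_mul_assoc]

theorem mon_mul (m n m' n' : ℕ) : mon m n * mon m' n' = mon (m + m') (n + n') := by
  simp only [mon, pow_add]
  ring

noncomputable def weight (a : Fin 4 → ℂ) (m n : ℕ) : ℂ := m * (a 0 + a 1) + n * (a 2 + a 3)

theorem diagEuler_mon (a : Fin 4 → ℂ) (m n : ℕ) :
    diagEuler a (mon m n) = weight a m n • mon m n := by
  have h01 := (diagEuler a).apply_mul_of_eq_smul (diagEuler_X a 0) (diagEuler_X a 1)
  have h23 := (diagEuler a).apply_mul_of_eq_smul (diagEuler_X a 2) (diagEuler_X a 3)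
  exact (diagEuler a).apply_mul_of_eq_smul ((diagEuler a).apply_pow_of_eq_smul h01 m)
    ((diagEuler a).apply_pow_of_eq_smul h23 n)

def genCoeff : Fin 4 → Fin 4 → ℂ :=
  ![![1, 1, 0, 0], ![0, 0, 1, 1], ![Complex.I, -Complex.I, 0, 0], ![0, 0, Complex.I, -Complex.I]]

theorem mem_genSet_iff {v : VF} : v ∈ genSet ↔ ∃ m n j, v = diagField (mon m n) (genCoeff j) := by
  have hgen (m n : ℕ) :
      P1 m n = diagField (mon m n) (genCoeff 0) ∧ P2 m n = diagField (mon m n) (genCoeff 1) ∧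
        R1 m n = diagField (mon m n) (genCoeff 2) ∧ R2 m n = diagField (mon m n) (genCoeff 3) := by
    refine ⟨?_, ?_, ?_, ?_⟩ <;> ext1 k <;> fin_cases k <;>
      simp [P1, P2, R1, R2, diagField, genCoeff]
  simp [genSet, Fin.exists_fin_succ, hgen]

theorem weight_genCoeff_real (j : Fin 4) (m n : ℕ) : ∃ r : ℝ, weight (genCoeff j) m n = r := by
  fin_cases j
  · exact ⟨2 * m, by simp [weight, genCoeff]; ring⟩
  · exact ⟨2 * n, by simp [weight, genCoeff]; ring⟩
  · exact ⟨0, by simp [weight, genCoeff]⟩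
  · exact ⟨0, by simp [weight, genCoeff]⟩

theorem vBr_mem_span_genSet {v w : VF} (hv : v ∈ genSet) (hw : w ∈ genSet) :
    vBr v w ∈ Submodule.span ℝ genSet := by
  obtain ⟨m, n, i, rfl⟩ := mem_genSet_iff.1 hv
  obtain ⟨m', n', j, rfl⟩ := mem_genSet_iff.1 hw
  obtain ⟨r, hr⟩ := weight_genCoeff_real i m' n'
  obtain ⟨s, hs⟩ := weight_genCoeff_real j m n
  have hgen (k : Fin 4) :
      diagField (mon (m + m') (n + n')) (genCoeff k) ∈ Submodule.span ℝ genSet :=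
    Submodule.subset_span (mem_genSet_iff.2 ⟨_, _, k, rfl⟩)
  rw [vBr_diagField, diagEuler_mon, diagEuler_mon, hr, hs, mul_smul_comm, mul_smul_comm,
    diagField_smul, diagField_smul, mon_mul, mon_mul, add_comm m', add_comm n', Complex.coe_smul,
    Complex.coe_smul]
  exact sub_mem (Submodule.smul_mem _ r (hgen j)) (Submodule.smul_mem _ s (hgen i))

/-- The real span of {P^k_{m,n}, R^k_{m,n}} is closed under the Lie bracket,
i.e., it is a real Lie subalgebra of the polynomial vector fields on ℂ⁴. -/
theorem span_closed_under_bracket :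
    ∀ v ∈ Submodule.span ℝ genSet, ∀ w ∈ Submodule.span ℝ genSet,
      vBr v w ∈ Submodule.span ℝ genSet := by
  intro v hv w hw
  have h := Submodule.apply_mem_map₂ (vBrₗ.restrictScalars₁₂ ℝ ℝ) hv hw
  rw [Submodule.map₂_span_span] at h
  exact Submodule.span_le.2 (Set.image2_subset_iff.2 fun _ hx _ hy => vBr_mem_span_genSet hx hy) h
end

section
/- Let V = a¹ P¹_{0,1} + a¹ P¹_{1,0} − 4a² P²_{0,1} − 4a² P²_{1,0} with a¹ = a² = 1 (the grade-1 part of the third-level example). Then the kernel of the map u ↦ [u, V], with u ranging over the grade-1 space spanned by {P^k_{j,1−j}, R^k_{j,1−j} : k ∈ {1,2}, 0 ≤ j ≤ 1}, is one-dimensional, spanned by P¹_{0,1} + P¹_{1,0} − 4P²_{0,1} − 4P²_{1,0}. -/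
open MvPolynomial

/-- The grade-1 part V = P¹_{0,1} + P¹_{1,0} − 4P²_{0,1} − 4P²_{1,0}. -/
noncomputable def Vex : VF :=
  P1 0 1 + P1 1 0 - (4:ℝ) • P2 0 1 - (4:ℝ) • P2 1 0

/-- The grade-1 space: real span of {P^k_{j,1−j}, R^k_{j,1−j} : k ∈ {1,2}, 0 ≤ j ≤ 1}. -/
noncomputable def Grade1 : Submodule ℝ VF :=
  Submodule.span ℝ {P1 0 1, P1 1 0, P2 0 1, P2 1 0, R1 0 1, R1 1 0, R2 0 1, R2 1 0}


lemma rsmul (r : ℝ) (p : Poly4) : r • p = C (r:ℂ) * p := by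
  rw [← smul_eq_C_mul, ← smul_one_smul ℂ r p]
  norm_num

lemma vBr_smul_self (r : ℝ) (v : VF) : vBr (r • v) v = 0 := by
  funext k
  show vAct (r • v) (v k) - vAct v (r • v k) = 0
  have h1 : vAct (r • v) (v k) = C (r:ℂ) * vAct v (v k) := by
    simp only [vAct, Pi.smul_apply, rsmul, Finset.mul_sum]
    exact Finset.sum_congr rfl (fun i _ => by ring)
  have h2 : vAct v (r • v k) = C (r:ℂ) * vAct v (v k) := by
    simp only [vAct, rsmul, pderiv_C_mul, Finset.mul_sum]
    exact Finset.sum_congr rfl (fun i _ => by ring)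
  rw [h1, h2, sub_self]

set_option maxHeartbeats 2000000 in
/-- The kernel of u ↦ [u, V] restricted to the grade-1 space is one-dimensional,
spanned by P¹_{0,1} + P¹_{1,0} − 4P²_{0,1} − 4P²_{1,0}. -/
theorem kernel_grade1_one_dimensional :
    ∀ u ∈ Grade1, (vBr u Vex = 0 ↔ u ∈ Submodule.span ℝ {Vex}) := by
  intro u hu
  constructor
  · intro hbr
    simp only [Grade1, Submodule.mem_span_insert, Submodule.mem_span_singleton] at hu
    obtain ⟨a, _, ⟨b, _, ⟨c, _, ⟨d, _, ⟨e, _, ⟨f, _, ⟨g, _, ⟨h, rfl⟩, rfl⟩, rfl⟩, rfl⟩, rfl⟩,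
      rfl⟩, rfl⟩, rfl⟩ := hu
    have E1 := congrArg (eval ![1,0,1,1]) (congrFun hbr 0)
    simp only [vBr, vAct, Vex, P1, P2, R1, R2, mon, Fin.sum_univ_four, Pi.add_apply,
      Pi.smul_apply, Pi.sub_apply, rsmul, pow_zero, pow_one, one_mul, mul_one,
      Matrix.cons_val_zero, Matrix.cons_val_one, Matrix.head_cons, Matrix.cons_val_two,
      Matrix.tail_cons, Matrix.cons_val_three, mul_zero, zero_mul, map_add, map_sub, map_mul,
      pderiv_mul, pderiv_X_self, pderiv_X_of_ne, eval_X, eval_C, eval_zero, Pi.zero_apply,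
      map_zero, smul_eq_mul] at E1
    norm_num [Pi.single_apply, show (0:Fin 4) ≠ 1 by decide, show (0:Fin 4) ≠ 2 by decide, show (0:Fin 4) ≠ 3 by decide, show (1:Fin 4) ≠ 0 by decide, show (1:Fin 4) ≠ 2 by decide, show (1:Fin 4) ≠ 3 by decide, show (2:Fin 4) ≠ 0 by decide, show (2:Fin 4) ≠ 1 by decide, show (2:Fin 4) ≠ 3 by decide, show (3:Fin 4) ≠ 0 by decide, show (3:Fin 4) ≠ 1 by decide, show (3:Fin 4) ≠ 2 by decide, Complex.ext_iff] at E1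
    have E2 := congrArg (eval ![1,1,0,0]) (congrFun hbr 0)
    simp only [vBr, vAct, Vex, P1, P2, R1, R2, mon, Fin.sum_univ_four, Pi.add_apply,
      Pi.smul_apply, Pi.sub_apply, rsmul, pow_zero, pow_one, one_mul, mul_one,
      Matrix.cons_val_zero, Matrix.cons_val_one, Matrix.head_cons, Matrix.cons_val_two,
      Matrix.tail_cons, Matrix.cons_val_three, mul_zero, zero_mul, map_add, map_sub, map_mul,
      pderiv_mul, pderiv_X_self, pderiv_X_of_ne, eval_X, eval_C, eval_zero, Pi.zero_apply,
      map_zero, smul_eq_mul] at E2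
    norm_num [Pi.single_apply, show (0:Fin 4) ≠ 1 by decide, show (0:Fin 4) ≠ 2 by decide, show (0:Fin 4) ≠ 3 by decide, show (1:Fin 4) ≠ 0 by decide, show (1:Fin 4) ≠ 2 by decide, show (1:Fin 4) ≠ 3 by decide, show (2:Fin 4) ≠ 0 by decide, show (2:Fin 4) ≠ 1 by decide, show (2:Fin 4) ≠ 3 by decide, show (3:Fin 4) ≠ 0 by decide, show (3:Fin 4) ≠ 1 by decide, show (3:Fin 4) ≠ 2 by decide, Complex.ext_iff] at E2
    have E3 := congrArg (eval ![1,1,1,1]) (congrFun hbr 0)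
    simp only [vBr, vAct, Vex, P1, P2, R1, R2, mon, Fin.sum_univ_four, Pi.add_apply,
      Pi.smul_apply, Pi.sub_apply, rsmul, pow_zero, pow_one, one_mul, mul_one,
      Matrix.cons_val_zero, Matrix.cons_val_one, Matrix.head_cons, Matrix.cons_val_two,
      Matrix.tail_cons, Matrix.cons_val_three, mul_zero, zero_mul, map_add, map_sub, map_mul,
      pderiv_mul, pderiv_X_self, pderiv_X_of_ne, eval_X, eval_C, eval_zero, Pi.zero_apply,
      map_zero, smul_eq_mul] at E3
    norm_num [Pi.single_apply, show (0:Fin 4) ≠ 1 by decide, show (0:Fin 4) ≠ 2 by decide, show (0:Fin 4) ≠ 3 by decide, show (1:Fin 4) ≠ 0 by decide, show (1:Fin 4) ≠ 2 by decide, show (1:Fin 4) ≠ 3 by decide, show (2:Fin 4) ≠ 0 by decide, show (2:Fin 4) ≠ 1 by decide, show (2:Fin 4) ≠ 3 by decide, show (3:Fin 4) ≠ 0 by decide, show (3:Fin 4) ≠ 1 by decide, show (3:Fin 4) ≠ 2 by decide, Complex.ext_iff] at E3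
    have E4 := congrArg (eval ![0,1,1,1]) (congrFun hbr 2)
    simp only [vBr, vAct, Vex, P1, P2, R1, R2, mon, Fin.sum_univ_four, Pi.add_apply,
      Pi.smul_apply, Pi.sub_apply, rsmul, pow_zero, pow_one, one_mul, mul_one,
      Matrix.cons_val_zero, Matrix.cons_val_one, Matrix.head_cons, Matrix.cons_val_two,
      Matrix.tail_cons, Matrix.cons_val_three, mul_zero, zero_mul, map_add, map_sub, map_mul,
      pderiv_mul, pderiv_X_self, pderiv_X_of_ne, eval_X, eval_C, eval_zero, Pi.zero_apply,
      map_zero, smul_eq_mul] at E4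
    norm_num [Pi.single_apply, show (0:Fin 4) ≠ 1 by decide, show (0:Fin 4) ≠ 2 by decide, show (0:Fin 4) ≠ 3 by decide, show (1:Fin 4) ≠ 0 by decide, show (1:Fin 4) ≠ 2 by decide, show (1:Fin 4) ≠ 3 by decide, show (2:Fin 4) ≠ 0 by decide, show (2:Fin 4) ≠ 1 by decide, show (2:Fin 4) ≠ 3 by decide, show (3:Fin 4) ≠ 0 by decide, show (3:Fin 4) ≠ 1 by decide, show (3:Fin 4) ≠ 2 by decide, Complex.ext_iff] at E4
    have E5 := congrArg (eval ![1,1,1,0]) (congrFun hbr 2)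
    simp only [vBr, vAct, Vex, P1, P2, R1, R2, mon, Fin.sum_univ_four, Pi.add_apply,
      Pi.smul_apply, Pi.sub_apply, rsmul, pow_zero, pow_one, one_mul, mul_one,
      Matrix.cons_val_zero, Matrix.cons_val_one, Matrix.head_cons, Matrix.cons_val_two,
      Matrix.tail_cons, Matrix.cons_val_three, mul_zero, zero_mul, map_add, map_sub, map_mul,
      pderiv_mul, pderiv_X_self, pderiv_X_of_ne, eval_X, eval_C, eval_zero, Pi.zero_apply,
      map_zero, smul_eq_mul] at E5
    norm_num [Pi.single_apply, show (0:Fin 4) ≠ 1 by decide, show (0:Fin 4) ≠ 2 by decide, show (0:Fin 4) ≠ 3 by decide, show (1:Fin 4) ≠ 0 by decide, show (1:Fin 4) ≠ 2 by decide, show (1:Fin 4) ≠ 3 by decide, show (2:Fin 4) ≠ 0 by decide, show (2:Fin 4) ≠ 1 by decide, show (2:Fin 4) ≠ 3 by decide, show (3:Fin 4) ≠ 0 by decide, show (3:Fin 4) ≠ 1 by decide, show (3:Fin 4) ≠ 2 by decide, Complex.ext_iff] at E5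
    have E6 := congrArg (eval ![1,1,1,1]) (congrFun hbr 2)
    simp only [vBr, vAct, Vex, P1, P2, R1, R2, mon, Fin.sum_univ_four, Pi.add_apply,
      Pi.smul_apply, Pi.sub_apply, rsmul, pow_zero, pow_one, one_mul, mul_one,
      Matrix.cons_val_zero, Matrix.cons_val_one, Matrix.head_cons, Matrix.cons_val_two,
      Matrix.tail_cons, Matrix.cons_val_three, mul_zero, zero_mul, map_add, map_sub, map_mul,
      pderiv_mul, pderiv_X_self, pderiv_X_of_ne, eval_X, eval_C, eval_zero, Pi.zero_apply,
      map_zero, smul_eq_mul] at E6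
    norm_num [Pi.single_apply, show (0:Fin 4) ≠ 1 by decide, show (0:Fin 4) ≠ 2 by decide, show (0:Fin 4) ≠ 3 by decide, show (1:Fin 4) ≠ 0 by decide, show (1:Fin 4) ≠ 2 by decide, show (1:Fin 4) ≠ 3 by decide, show (2:Fin 4) ≠ 0 by decide, show (2:Fin 4) ≠ 1 by decide, show (2:Fin 4) ≠ 3 by decide, show (3:Fin 4) ≠ 0 by decide, show (3:Fin 4) ≠ 1 by decide, show (3:Fin 4) ≠ 2 by decide, Complex.ext_iff] at E6
    have hb : b = a := by linarith [E1.1, E3.1, E5.1]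
    have hc : c = -4 * a := by linarith [E1.1]
    have hd : d = -4 * a := by linarith [E1.1, E3.1, E5.1]
    have he : e = 0 := by linarith [E1.2]
    have hf : f = 0 := by linarith [E2]
    have hg : g = 0 := by linarith [E4.2]
    have hh : h = 0 := by linarith [E5.2]
    refine Submodule.mem_span_singleton.mpr ⟨a, ?_⟩
    simp only [Vex, hb, hc, hd, he, hf, hg, hh]
    module
  · intro hs
    obtain ⟨r, rfl⟩ := Submodule.mem_span_singleton.mp hs
    exact vBr_smul_self r Vex
end
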